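/- For every positive even integer n, the edge-balanced index set of the crown graph K_n × K_2 equals the set of even integers from 0 to 2n−4; that is, EBI(K_n × K_2) = { k : k is even and 0 ≤ k ≤ 2n−4 }. -/

import Mathlib

open SimpleGraph

/-- The lexicographic product (composition) `G[H]`. -/
def lexProd {α β : Type*} (G : SimpleGraph α) (H : SimpleGraph β) :
    SimpleGraph (α × β) where
  Adj x y := G.Adj x.1 y.1 ∨ (x.1 = y.1 ∧ H.Adj x.2 y.2)
  symm := ⟨fun x y (h : G.Adj x.1 y.1 ∨ (x.1 = y.1 ∧ H.Adj x.2 y.2)) =>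
    h.elim (fun h' => Or.inl h'.symm) (fun ⟨he, h2⟩ => Or.inr ⟨he.symm, h2.symm⟩)⟩
  loopless := ⟨fun x (h : G.Adj x.1 x.1 ∨ (x.1 = x.1 ∧ H.Adj x.2 x.2)) =>
    h.elim (G.loopless.irrefl x.1) (fun ⟨_, h2⟩ => H.loopless.irrefl x.2 h2)⟩

/-- The direct (tensor, Kronecker) product `G × H`. -/
def tensorProd {α β : Type*} (G : SimpleGraph α) (H : SimpleGraph β) :
    SimpleGraph (α × β) where
  Adj x y := G.Adj x.1 y.1 ∧ H.Adj x.2 y.2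
  symm := ⟨fun _ _ (⟨h1, h2⟩ : _ ∧ _) => ⟨h1.symm, h2.symm⟩⟩
  loopless := ⟨fun x (h : _ ∧ _) => G.loopless.irrefl x.1 h.1⟩

/-- The number of edges labeled `i` by the edge labeling `f`. -/
noncomputable def edgeCount {V : Type*} (G : SimpleGraph V) (f : G.edgeSet → ZMod 2) (i : ZMod 2) : ℕ :=
  Nat.card {e : G.edgeSet // f e = i}

/-- The number of edges incident to `v` that are labeled `i` (the `i`-degree of `v`). -/
noncomputable def labDeg {V : Type*} (G : SimpleGraph V) (f : G.edgeSet → ZMod 2) (i : ZMod 2) (v : V) : ℕ :=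
  Nat.card {e : G.edgeSet // f e = i ∧ v ∈ (e : Sym2 V)}

/-- The number of vertices whose induced (partial) label is `i`: those incident to strictly
more `i`-edges than `(1-i)`-edges. -/
noncomputable def vertexCount {V : Type*} (G : SimpleGraph V) (f : G.edgeSet → ZMod 2) (i : ZMod 2) : ℕ :=
  Nat.card {v : V // labDeg G f (1 - i) v < labDeg G f i v}

/-- An edge labeling (a surjective function onto `ZMod 2`) is edge-friendly if
`|e_f(0) - e_f(1)| ≤ 1`. -/
def EdgeFriendly {V : Type*} (G : SimpleGraph V) (f : G.edgeSet → ZMod 2) : Prop :=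
  Function.Surjective f ∧ |(edgeCount G f 0 : ℤ) - (edgeCount G f 1 : ℤ)| ≤ 1

/-- A graph is strongly edge-balanced if some edge-friendly labeling `f` satisfies
`v_f(0) = v_f(1)` and `e_f(0) = e_f(1)`. -/
def StronglyEdgeBalanced {V : Type*} (G : SimpleGraph V) : Prop :=
  ∃ f : G.edgeSet → ZMod 2, EdgeFriendly G f ∧
    vertexCount G f 0 = vertexCount G f 1 ∧ edgeCount G f 0 = edgeCount G f 1

/-- `|v_f(0) - v_f(1)|` for an edge labeling `f`. -/
noncomputable def ebIndex {V : Type*} (G : SimpleGraph V) (f : G.edgeSet → ZMod 2) : ℕ :=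
  ((vertexCount G f 0 : ℤ) - (vertexCount G f 1 : ℤ)).natAbs

/-- The edge-balanced index set of `G`. -/
def EBI {V : Type*} (G : SimpleGraph V) : Set ℕ :=
  {k | ∃ f : G.edgeSet → ZMod 2, EdgeFriendly G f ∧ ebIndex G f = k}

/-- The crown graph `K_n × K_2`: the direct product of the complete graph on `n` vertices
with `K_2`; `(u,a)` is adjacent to `(v,b)` iff `u ≠ v` and `a ≠ b`. -/
def crown (n : ℕ) : SimpleGraph (Fin n × Fin 2) :=
  tensorProd (⊤ : SimpleGraph (Fin n)) (⊤ : SimpleGraph (Fin 2))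


/-!
An edge of `K_n × K_2` joins `(u, 0)` to `(v, 1)` with `u ≠ v`, so a labelling is an `n × n`
matrix without diagonal: `(u, 0)` sees row `u` and `(v, 1)` sees column `v`. For `n = 2h` every
vertex has odd degree `2h - 1`, so each vertex gets a label and `v_f(0) + v_f(1) = 2n`, which makes
the index `|2 v_f(0) - 2n|` even. An edge-friendly labelling has exactly `h (n - 1)` edges of each
label, while a vertex labelled `i` is incident to at least `h` of them; as each edge has one end
on each side, at most `n - 1` vertices of a side carry the label `i`, whence `2 ≤ v_f(i)` and the
bound `2n - 4`. Conversely, the labelling `u < v` has index `0`, and trading a corner of its upper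
triangle for a staircase below the diagonal raises the index to any `2t ≤ 2n - 4`.
-/

open Finset

lemma ZMod.two_ne_iff_eq_one_sub {a i : ZMod 2} : a ≠ i ↔ a = 1 - i := by
  revert a i; decide

section Labelings

variable {V : Type*} {G : SimpleGraph V} (f : G.edgeSet → ZMod 2)

lemma labDeg_eq_card_incidenceSet (i : ZMod 2) (v : V) :
    labDeg G f i v = Nat.card {e : G.incidenceSet v // f ⟨e, e.2.1⟩ = i} :=
  Nat.card_congr
    { toFun e := ⟨⟨e.1, e.1.2, e.2.2⟩, e.2.1⟩
      invFun e := ⟨⟨e.1, e.1.2.1⟩, e.2, e.1.2.2⟩ }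

lemma labDeg_comp_val (c : Sym2 V → ZMod 2) (i : ZMod 2) (v : V) :
    labDeg G (fun e => c e) i v = Nat.card {w // G.Adj v w ∧ c s(v, w) = i} := by
  classical
  rw [labDeg_eq_card_incidenceSet]
  exact (Nat.card_congr ((Equiv.subtypeSubtypeEquivSubtypeInter (G.Adj v) (c s(v, ·) = i)).symm.trans
    ((G.incidenceSetEquivNeighborSet v).symm.subtypeEquiv fun _ => Iff.rfl))).symm

variable [Fintype V] [DecidableRel G.Adj]

lemma labDeg_add_labDeg_one_sub (i : ZMod 2) (v : V) :
    labDeg G f i v + labDeg G f (1 - i) v = G.degree v := by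
  classical
  simp only [labDeg_eq_card_incidenceSet, Nat.card_eq_fintype_card, Fintype.card_subtype,
    ← ZMod.two_ne_iff_eq_one_sub]
  rw [card_filter_add_card_filter_not, card_univ, card_incidenceSet_eq_degree]

lemma labDeg_one_sub_lt_iff {i : ZMod 2} {v : V} {k : ℕ} (hv : G.degree v + 1 = 2 * k) :
    labDeg G f (1 - i) v < labDeg G f i v ↔ k ≤ labDeg G f i v := by
  have := labDeg_add_labDeg_one_sub f i v
  omega

lemma vertexCount_zero_add_one (hodd : ∀ v, Odd (G.degree v)) :
    vertexCount G f 0 + vertexCount G f 1 = Fintype.card V := by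
  classical
  have hne (v : V) : labDeg G f 1 v ≠ labDeg G f 0 v := fun heq => by
    have := labDeg_add_labDeg_one_sub f 0 v
    rw [sub_zero, heq] at this
    exact Nat.not_odd_iff_even.mpr ⟨_, this.symm⟩ (hodd v)
  have hflip : univ.filter (fun v => labDeg G f 0 v < labDeg G f 1 v) =
      univ.filter (fun v => ¬ labDeg G f 1 v < labDeg G f 0 v) :=
    filter_congr fun v _ => by have := hne v; omega
  simp only [vertexCount, sub_zero, sub_self, Nat.card_eq_fintype_card, Fintype.card_subtype]
  rw [hflip, card_filter_add_card_filter_not, card_univ]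

end Labelings

namespace SimpleGraph.IsBipartiteWith

variable {V : Type*} {G : SimpleGraph V} {s : Finset V} {t : Set V}

lemma card_filter_mem_edge [DecidableEq V] (h : G.IsBipartiteWith s t) {e : Sym2 V}
    (he : e ∈ G.edgeSet) : #{v ∈ s | v ∈ e} = 1 := by
  have hst (x y : V) (hx : x ∈ s) (hy : y ∈ t) : #{v ∈ s | v ∈ s(x, y)} = 1 := by
    have hy' : y ∉ s := fun hy' => Set.disjoint_left.mp h.disjoint hy' hy
    rw [card_eq_one]
    exact ⟨x, by ext v; constructor <;> aesop⟩
  induction e with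
  | _ a b =>
  rcases h.mem_of_adj he with ⟨ha, hb⟩ | ⟨ha, hb⟩
  · exact hst a b ha hb
  · rw [Sym2.eq_swap]; exact hst b a hb ha

variable [Fintype V] (f : G.edgeSet → ZMod 2)

lemma sum_labDeg (h : G.IsBipartiteWith s t) (i : ZMod 2) :
    ∑ v ∈ s, labDeg G f i v = edgeCount G f i := by
  classical
  simp only [labDeg, edgeCount, Nat.card_eq_fintype_card, Fintype.card_subtype, card_filter]
  rw [sum_comm]
  refine sum_congr rfl fun e _ => ?_
  by_cases hfe : f e = i
  · simp only [hfe, true_and, if_true, ← card_filter]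
    exact h.card_filter_mem_edge e.2
  · simp [hfe]

lemma mul_card_majority_le [DecidableRel G.Adj] (h : G.IsBipartiteWith s t) {k : ℕ}
    (hdeg : ∀ v ∈ s, G.degree v + 1 = 2 * k) (i : ZMod 2) :
    k * #{v ∈ s | labDeg G f (1 - i) v < labDeg G f i v} ≤ edgeCount G f i :=
  calc k * #{v ∈ s | labDeg G f (1 - i) v < labDeg G f i v}
      = ∑ v ∈ s with labDeg G f (1 - i) v < labDeg G f i v, k := by
        rw [sum_const, smul_eq_mul, mul_comm]
    _ ≤ ∑ v ∈ s with labDeg G f (1 - i) v < labDeg G f i v, labDeg G f i v :=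
        sum_le_sum fun v hv => by
          rw [mem_filter] at hv
          exact (labDeg_one_sub_lt_iff f (hdeg v hv.1)).mp hv.2
    _ ≤ ∑ v ∈ s, labDeg G f i v := sum_le_sum_of_subset (filter_subset _ _)
    _ = edgeCount G f i := h.sum_labDeg f i

end SimpleGraph.IsBipartiteWith

section EdgeFriendly

variable {V : Type*} {G : SimpleGraph V} {f : G.edgeSet → ZMod 2}

lemma EdgeFriendly.edgeCount_eq {m : ℕ} (hf : EdgeFriendly G f)
    (htot : edgeCount G f 0 + edgeCount G f 1 = 2 * m) :
    edgeCount G f 0 = m ∧ edgeCount G f 1 = m := by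
  have := abs_le.mp hf.2
  omega

lemma edgeFriendly_of_edgeCount_eq (heq : edgeCount G f 0 = edgeCount G f 1)
    (hpos : 0 < edgeCount G f 0) : EdgeFriendly G f := by
  refine ⟨fun i => ?_, by rw [heq, sub_self, abs_zero]; exact zero_le_one⟩
  have hi : 0 < edgeCount G f i := by fin_cases i; exacts [hpos, heq ▸ hpos]
  obtain ⟨e, he⟩ := (Nat.card_pos_iff.mp hi).1
  exact ⟨e, he⟩

end EdgeFriendly

section Prod

variable {α β : Type*} [Fintype α] [Fintype β] [DecidableEq β]

lemma card_filter_snd_eq (P : α × β → Prop) [DecidablePred P] (b : β) :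
    #{x ∈ ({x | x.2 = b} : Finset (α × β)) | P x} = #{a | P (a, b)} := by
  refine card_nbij' Prod.fst (fun a => (a, b)) ?_ ?_ ?_ ?_ <;> intro x hx <;> aesop

lemma sum_filter_snd_eq {M : Type*} [AddCommMonoid M] (F : α × β → M) (b : β) :
    ∑ x ∈ ({x | x.2 = b} : Finset (α × β)), F x = ∑ a, F (a, b) := by
  rw [sum_filter, Fintype.sum_prod_type]
  simp

lemma natCard_subtype_prod_fin_two (P : α × Fin 2 → Prop) [DecidablePred P] :
    Nat.card {x // P x} = #{a | P (a, 0)} + #{a | P (a, 1)} := by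
  rw [Nat.card_eq_fintype_card, Fintype.card_subtype, card_filter, card_filter, card_filter,
    Fintype.sum_prod_type, ← sum_add_distrib]
  simp only [Fin.sum_univ_two]

end Prod

lemma Fin.card_filter_univ_val {m : ℕ} (P : ℕ → Prop) [DecidablePred P] :
    #{u : Fin m | P u} = #{x ∈ range m | P x} := by
  simp only [card_filter]
  exact Fin.sum_univ_eq_sum_range (fun x => if P x then 1 else 0) m

section Crown

variable {n : ℕ}

lemma crown_adj {x y : Fin n × Fin 2} : (crown n).Adj x y ↔ x.1 ≠ y.1 ∧ x.2 ≠ y.2 := Iff.rfl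

lemma crown_isBipartiteWith (b : Fin 2) :
    (crown n).IsBipartiteWith ↑({x | x.2 = b} : Finset (Fin n × Fin 2)) {x | x.2 ≠ b} where
  disjoint := Set.disjoint_left.mpr fun x hx hx' => hx' (by simpa using hx)
  mem_of_adj x y hxy := by
    have := (crown_adj.mp hxy).2
    simp only [coe_filter, mem_univ, true_and, Set.mem_ofPred_eq]
    omega

lemma crown_degree [DecidableRel (crown n).Adj] (x : Fin n × Fin 2) :
    (crown n).degree x = n - 1 := by
  have : (crown n).neighborFinset x = univ.erase x.1 ×ˢ univ.erase x.2 := by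
    ext y
    simp [crown_adj, ne_comm]
  rw [← card_neighborFinset_eq_degree, this, card_product, card_erase_of_mem (mem_univ _),
    card_erase_of_mem (mem_univ _)]
  simp

lemma crown_edgeCount_add (f : (crown n).edgeSet → ZMod 2) :
    edgeCount (crown n) f 0 + edgeCount (crown n) f 1 = n * (n - 1) := by
  classical
  have hside := crown_isBipartiteWith (n := n) 0
  rw [← hside.sum_labDeg f 0, ← hside.sum_labDeg f 1, ← sum_add_distrib]
  have hdeg (x : Fin n × Fin 2) : labDeg (crown n) f 0 x + labDeg (crown n) f 1 x = n - 1 := by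
    simpa [crown_degree] using labDeg_add_labDeg_one_sub f 0 x
  rw [sum_congr rfl fun x _ => hdeg x, sum_filter_snd_eq]
  simp

lemma crown_vertexCount (f : (crown n).edgeSet → ZMod 2) (i : ZMod 2) :
    vertexCount (crown n) f i =
      #{a | labDeg (crown n) f (1 - i) (a, 0) < labDeg (crown n) f i (a, 0)} +
      #{a | labDeg (crown n) f (1 - i) (a, 1) < labDeg (crown n) f i (a, 1)} :=
  natCard_subtype_prod_fin_two _

lemma crown_labDeg_one_sub_lt_iff {k : ℕ} (f : (crown (2 * k)).edgeSet → ZMod 2) (hk : 0 < k)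
    {i : ZMod 2} {x : Fin (2 * k) × Fin 2} :
    labDeg (crown (2 * k)) f (1 - i) x < labDeg (crown (2 * k)) f i x ↔
      k ≤ labDeg (crown (2 * k)) f i x := by
  classical
  exact labDeg_one_sub_lt_iff f (by rw [crown_degree]; omega)

lemma vertexCount_crown_zero_add_one {k : ℕ} (hk : 0 < k) (f : (crown (2 * k)).edgeSet → ZMod 2) :
    vertexCount (crown (2 * k)) f 0 + vertexCount (crown (2 * k)) f 1 = 2 * (2 * k) := by
  classical
  have := vertexCount_zero_add_one f fun x => by
    rw [crown_degree]; exact Nat.Even.sub_odd (by omega) (even_two_mul k) odd_one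
  rw [Fintype.card_prod, Fintype.card_fin, Fintype.card_fin] at this
  omega

lemma crown_card_majority_le {k : ℕ} (hk : 0 < k) {f : (crown (2 * k)).edgeSet → ZMod 2}
    (hf : EdgeFriendly (crown (2 * k)) f) (i : ZMod 2) (b : Fin 2) :
    #{a | labDeg (crown (2 * k)) f (1 - i) (a, b) < labDeg (crown (2 * k)) f i (a, b)} ≤
      2 * k - 1 := by
  classical
  have hcount : edgeCount (crown (2 * k)) f i = k * (2 * k - 1) := by
    obtain ⟨h0, h1⟩ := hf.edgeCount_eq (by rw [crown_edgeCount_add, mul_assoc])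
    fin_cases i <;> assumption
  have hdeg : ∀ x ∈ ({x | x.2 = b} : Finset _), (crown (2 * k)).degree x + 1 = 2 * k :=
    fun x _ => by rw [crown_degree]; omega
  have := (crown_isBipartiteWith b).mul_card_majority_le f hdeg i
  rw [hcount, card_filter_snd_eq] at this
  exact Nat.le_of_mul_le_mul_left this hk

theorem ebIndex_crown_even_and_le {k : ℕ} (hk : 0 < k) {f : (crown (2 * k)).edgeSet → ZMod 2}
    (hf : EdgeFriendly (crown (2 * k)) f) :
    Even (ebIndex (crown (2 * k)) f) ∧ ebIndex (crown (2 * k)) f ≤ 2 * (2 * k) - 4 := by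
  have htot := vertexCount_crown_zero_add_one hk f
  have h00 := crown_card_majority_le hk hf 0 0
  have h01 := crown_card_majority_le hk hf 0 1
  have h10 := crown_card_majority_le hk hf 1 0
  have h11 := crown_card_majority_le hk hf 1 1
  rw [ebIndex, Nat.even_iff]
  rw [crown_vertexCount f 0, crown_vertexCount f 1] at htot ⊢
  omega

def crownLabeling (g : Fin n → Fin n → ZMod 2) (e : (crown n).edgeSet) : ZMod 2 :=
  Sym2.lift ⟨fun (x y : Fin n × Fin 2) => if x.2 = y.2 then 0
      else if x.2 = 0 then g x.1 y.1 else g y.1 x.1,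
    fun x y => by
      by_cases hxy : x.2 = y.2
      · simp [hxy]
      · have : y.2 = 0 ↔ x.2 ≠ 0 := by omega
        simp only [hxy, Ne.symm hxy, this, if_false]
        split_ifs <;> simp_all⟩ e

lemma labDeg_crownLabeling_row (g : Fin n → Fin n → ZMod 2) (i : ZMod 2) (w : Fin n) :
    labDeg (crown n) (crownLabeling g) i (w, 0) = #{u | u ≠ w ∧ g w u = i} := by
  classical
  unfold crownLabeling
  rw [labDeg_comp_val, Nat.card_eq_fintype_card, Fintype.card_subtype]
  refine card_nbij' Prod.fst (·, 1) ?_ ?_ ?_ ?_ <;> intro x hx <;>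
    simp_all [crown_adj, Prod.ext_iff] <;> grind

lemma labDeg_crownLabeling_col (g : Fin n → Fin n → ZMod 2) (i : ZMod 2) (w : Fin n) :
    labDeg (crown n) (crownLabeling g) i (w, 1) = #{u | u ≠ w ∧ g u w = i} := by
  classical
  unfold crownLabeling
  rw [labDeg_comp_val, Nat.card_eq_fintype_card, Fintype.card_subtype]
  refine card_nbij' Prod.fst (·, 0) ?_ ?_ ?_ ?_ <;> intro x hx <;>
    simp_all [crown_adj, Prod.ext_iff] <;> grind

end Crown

/-- The cells `(u, v)` labelled `0`: the upper triangle `u < v` without its corner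
`v - u ≥ 2h - i`, together with a staircase below the diagonal in the rows `h, …, h + i - 1` and
the columns `h - j, …, h - 1` (and the column `0` when `i = j + 1`). The staircase has as many
cells as the corner and makes these `i` rows and `j` columns `0`-majority. -/
def ZeroCell (h i j u v : ℕ) : Prop :=
  (u < v ∧ v - u < 2 * h - i) ∨
  (h ≤ u ∧ u < h + i ∧ h - j ≤ v ∧ v < h ∧ i + v ≤ u) ∨
  (j < i ∧ h ≤ u ∧ u < h + i ∧ v = 0)

instance (h i j u v : ℕ) : Decidable (ZeroCell h i j u v) := by
  unfold ZeroCell; infer_instance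

def zeroRowCount (h i w : ℕ) : ℕ :=
  if w < h then 2 * h - 1 - max i w else if w < h + i then h else 2 * h - 1 - w

def zeroColCount (h i j v : ℕ) : ℕ :=
  if v = 0 then (i - j) * i else if v < h - j then v else if v < h then h
  else min v (2 * h - 1 - i)

section ZeroCell

variable {h i j : ℕ}

lemma card_zeroCell_row (hji : j ≤ i) (hij : i ≤ j + 1) (hih : i < h) (w : ℕ) :
    #{v ∈ range (2 * h) | v ≠ w ∧ ZeroCell h i j w v} = zeroRowCount h i w := by
  have hdisj {a b c d : ℕ} (hbc : b ≤ c) : Disjoint (Ico a b) (Ico c d) :=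
    disjoint_left.mpr fun x hx hx' => by rw [mem_Ico] at hx hx'; omega
  unfold zeroRowCount
  rcases lt_or_ge w h with hwh | hwh
  · rw [if_pos hwh]
    rcases lt_or_ge w i with hwi | hwi
    · rw [show {v ∈ range (2 * h) | v ≠ w ∧ ZeroCell h i j w v} = Ico (w + 1) (w + (2 * h - i)) by
        ext v; simp [ZeroCell]; omega, Nat.card_Ico]
      omega
    · rw [show {v ∈ range (2 * h) | v ≠ w ∧ ZeroCell h i j w v} = Ico (w + 1) (2 * h) by
        ext v; simp [ZeroCell]; omega, Nat.card_Ico]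
      omega
  rw [if_neg (by omega)]
  rcases lt_or_ge w (h + i) with hwi | hwi
  · rw [if_pos hwi]
    rcases Nat.lt_or_ge j i with hji' | hji'
    · rw [show {v ∈ range (2 * h) | v ≠ w ∧ ZeroCell h i j w v} =
          insert 0 (Ico (h - j) (w + 1 - i) ∪ Ico (w + 1) (2 * h)) by
          ext v; simp [ZeroCell]; omega,
        card_insert_of_notMem (by simp; omega), card_union_of_disjoint (hdisj (by omega)),
        Nat.card_Ico, Nat.card_Ico]
      omega
    · rw [show {v ∈ range (2 * h) | v ≠ w ∧ ZeroCell h i j w v} =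
          Ico (h - j) (w + 1 - i) ∪ Ico (w + 1) (2 * h) by ext v; simp [ZeroCell]; omega,
        card_union_of_disjoint (hdisj (by omega)), Nat.card_Ico, Nat.card_Ico]
      omega
  · rw [if_neg (by omega), show {v ∈ range (2 * h) | v ≠ w ∧ ZeroCell h i j w v} =
        Ico (w + 1) (2 * h) by ext v; simp [ZeroCell]; omega, Nat.card_Ico]
    omega

lemma card_zeroCell_col (hji : j ≤ i) (hij : i ≤ j + 1) (hih : i < h) {v : ℕ} (hv : v < 2 * h) :
    #{u ∈ range (2 * h) | u ≠ v ∧ ZeroCell h i j u v} = zeroColCount h i j v := by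
  unfold zeroColCount
  rcases Nat.eq_zero_or_pos v with rfl | hv0
  · rw [if_pos rfl]
    rcases Nat.lt_or_ge j i with hji' | hji'
    · rw [show {u ∈ range (2 * h) | u ≠ 0 ∧ ZeroCell h i j u 0} = Ico h (h + i) by
        ext u; simp [ZeroCell]; omega, Nat.card_Ico, show i - j = 1 by omega]
      omega
    · rw [show {u ∈ range (2 * h) | u ≠ 0 ∧ ZeroCell h i j u 0} = ∅ by
        ext u; simp [ZeroCell]; omega, show i - j = 0 by omega]
      simp
  rw [if_neg (by omega)]
  rcases lt_or_ge v (h - j) with hvj | hvj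
  · rw [if_pos hvj, show {u ∈ range (2 * h) | u ≠ v ∧ ZeroCell h i j u v} = range v by
      ext u; simp [ZeroCell]; omega, card_range]
  rw [if_neg (by omega)]
  rcases lt_or_ge v h with hvh | hvh
  · rw [if_pos hvh, show {u ∈ range (2 * h) | u ≠ v ∧ ZeroCell h i j u v} =
        range v ∪ Ico (i + v) (h + i) by ext u; simp [ZeroCell]; omega,
      card_union_of_disjoint (disjoint_left.mpr fun x hx hx' => by simp at hx hx'; omega),
      card_range, Nat.card_Ico]
    omega
  · rw [if_neg (by omega), show {u ∈ range (2 * h) | u ≠ v ∧ ZeroCell h i j u v} =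
        Ico (v + i + 1 - 2 * h) v by ext u; simp [ZeroCell]; omega, Nat.card_Ico]
    omega

lemma sum_zeroRowCount (hih : i < h) :
    ∑ w ∈ range (2 * h), zeroRowCount h i w = h * (2 * h - 1) := by
  have hpt : ∀ w ∈ range (2 * h), zeroRowCount h i w + (if w < i then i - w else 0) =
      (2 * h - 1 - w) + (if h ≤ w ∧ w < h + i then w + 1 - h else 0) := fun w hw => by
    rw [mem_range] at hw
    unfold zeroRowCount
    split_ifs <;> omega
  have hcorner : ∑ w ∈ range (2 * h), (if w < i then i - w else 0) = ∑ k ∈ range i, (k + 1) := by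
    rw [← sum_filter, show {w ∈ range (2 * h) | w < i} = range i by ext; simp; omega,
      ← sum_range_reflect]
    exact sum_congr rfl fun k hk => by rw [mem_range] at hk; omega
  have hstair : ∑ w ∈ range (2 * h), (if h ≤ w ∧ w < h + i then w + 1 - h else 0) =
      ∑ k ∈ range i, (k + 1) := by
    rw [← sum_filter, show {w ∈ range (2 * h) | h ≤ w ∧ w < h + i} = Ico h (h + i) by
      ext; simp; omega, sum_Ico_eq_sum_range]
    exact sum_congr (by simp) fun k _ => by omega
  have htriangle : ∑ w ∈ range (2 * h), (2 * h - 1 - w) = h * (2 * h - 1) := by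
    have := sum_range_id_mul_two (2 * h)
    rw [← sum_range_reflect] at this
    linarith
  have := sum_congr rfl hpt
  rw [sum_add_distrib, sum_add_distrib, hcorner, hstair, htriangle] at this
  omega

lemma card_le_zeroRowCount (hih : i < h) :
    #{w ∈ range (2 * h) | h ≤ zeroRowCount h i w} = h + i := by
  rw [show {w ∈ range (2 * h) | h ≤ zeroRowCount h i w} = range (h + i) by
    ext w; rw [mem_filter, mem_range, mem_range, zeroRowCount]; split_ifs <;> omega, card_range]

lemma card_le_zeroColCount (hji : j ≤ i) (hij : i ≤ j + 1) (hih : i < h) :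
    #{v ∈ range (2 * h) | h ≤ zeroColCount h i j v} = h + j := by
  rw [show {v ∈ range (2 * h) | h ≤ zeroColCount h i j v} = Ico (h - j) (2 * h) by
    ext v
    rw [mem_filter, mem_range, mem_Ico, zeroColCount]
    rcases (by omega : i = j ∨ i = j + 1) with rfl | rfl <;> split_ifs <;> simp <;> omega,
    Nat.card_Ico]
  omega

end ZeroCell

def zeroCellMatrix (h i j : ℕ) (u v : Fin (2 * h)) : ZMod 2 :=
  if ZeroCell h i j u v then 0 else 1

section ZeroCellLabeling

variable {h i j : ℕ}

lemma zeroCellMatrix_eq_zero {u v : Fin (2 * h)} :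
    zeroCellMatrix h i j u v = 0 ↔ ZeroCell h i j u v := by
  simp [zeroCellMatrix]

lemma labDeg_zeroCellLabeling_row (hji : j ≤ i) (hij : i ≤ j + 1) (hih : i < h) (w : Fin (2 * h)) :
    labDeg (crown (2 * h)) (crownLabeling (zeroCellMatrix h i j)) 0 (w, 0) =
      zeroRowCount h i w := by
  rw [labDeg_crownLabeling_row, ← card_zeroCell_row hji hij hih w,
    ← Fin.card_filter_univ_val (fun v => v ≠ w ∧ ZeroCell h i j w v)]
  congr 1
  refine filter_congr fun v _ => ?_
  simp [Fin.val_eq_val, zeroCellMatrix_eq_zero]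

lemma labDeg_zeroCellLabeling_col (hji : j ≤ i) (hij : i ≤ j + 1) (hih : i < h)
    (w : Fin (2 * h)) :
    labDeg (crown (2 * h)) (crownLabeling (zeroCellMatrix h i j)) 0 (w, 1) =
      zeroColCount h i j w := by
  rw [labDeg_crownLabeling_col, ← card_zeroCell_col hji hij hih w.2,
    ← Fin.card_filter_univ_val (fun u => u ≠ w ∧ ZeroCell h i j u w)]
  congr 1
  refine filter_congr fun v _ => ?_
  simp [Fin.val_eq_val, zeroCellMatrix_eq_zero]

lemma edgeCount_zeroCellLabeling (hji : j ≤ i) (hij : i ≤ j + 1) (hih : i < h) (l : ZMod 2) :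
    edgeCount (crown (2 * h)) (crownLabeling (zeroCellMatrix h i j)) l = h * (2 * h - 1) := by
  have he0 : edgeCount (crown (2 * h)) (crownLabeling (zeroCellMatrix h i j)) 0 =
      h * (2 * h - 1) := by
    classical
    rw [← (crown_isBipartiteWith 0).sum_labDeg _ 0, sum_filter_snd_eq]
    simp only [labDeg_zeroCellLabeling_row hji hij hih]
    rw [Fin.sum_univ_eq_sum_range (zeroRowCount h i), sum_zeroRowCount hih]
  have htot := crown_edgeCount_add (crownLabeling (zeroCellMatrix h i j))
  rw [he0, mul_assoc] at htot
  fin_cases l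
  · exact he0
  · simp only [Fin.mk_one, Fin.isValue]; omega

lemma vertexCount_zeroCellLabeling (hji : j ≤ i) (hij : i ≤ j + 1) (hih : i < h) :
    vertexCount (crown (2 * h)) (crownLabeling (zeroCellMatrix h i j)) 0 = 2 * h + (i + j) := by
  rw [crown_vertexCount]
  simp only [crown_labDeg_one_sub_lt_iff _ (by omega : 0 < h)]
  simp only [labDeg_zeroCellLabeling_row hji hij hih, labDeg_zeroCellLabeling_col hji hij hih]
  rw [Fin.card_filter_univ_val (fun w => h ≤ zeroRowCount h i w),
    Fin.card_filter_univ_val (fun w => h ≤ zeroColCount h i j w),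
    card_le_zeroRowCount hih, card_le_zeroColCount hji hij hih]
  omega

end ZeroCellLabeling

theorem exists_edgeFriendly_ebIndex_crown {h t : ℕ} (ht : t + 2 ≤ 2 * h) :
    ∃ f, EdgeFriendly (crown (2 * h)) f ∧ ebIndex (crown (2 * h)) f = 2 * t := by
  obtain ⟨i, j, hji, hij, hih, rfl⟩ : ∃ i j, j ≤ i ∧ i ≤ j + 1 ∧ i < h ∧ t = i + j :=
    ⟨(t + 1) / 2, t / 2, by omega, by omega, by omega, by omega⟩
  have he := edgeCount_zeroCellLabeling hji hij hih
  have hv0 := vertexCount_zeroCellLabeling hji hij hih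
  have hv1 := vertexCount_crown_zero_add_one (by omega : 0 < h)
    (crownLabeling (zeroCellMatrix h i j))
  refine ⟨_, edgeFriendly_of_edgeCount_eq ((he 0).trans (he 1).symm) ?_, ?_⟩
  · rw [he]; exact Nat.mul_pos (by omega) (by omega)
  · rw [ebIndex]; omega

theorem EBI_crown_even (n : ℕ) (hpos : 0 < n) (heven : Even n) :
    EBI (crown n) = {k : ℕ | Even k ∧ k ≤ 2 * n - 4} := by
  obtain ⟨h, rfl⟩ := even_iff_two_dvd.mp heven
  ext k
  constructor
  · rintro ⟨f, hf, rfl⟩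
    exact ebIndex_crown_even_and_le (by omega) hf
  · rintro ⟨⟨t, rfl⟩, hk⟩
    obtain ⟨f, hf, hft⟩ := exists_edgeFriendly_ebIndex_crown (h := h) (t := t) (by omega)
    exact ⟨f, hf, by rw [hft, two_mul]⟩
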